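/- Let M ≥ 6 be an even integer and N1 ≥ 2. Define the TSAULAs position set P = {M/2 + kM : 0 ≤ k ≤ N1−1} ∪ {N1·M − M/2 + 2j : 1 ≤ j ≤ M/2 − 1} ∪ {−N1·M − M/2 + 1} ∪ {N1·M + M/2 − 1 + 2j : 1 ≤ j ≤ M/2 − 1}. Then the sum-difference co-array SDC = {u−v} ∪ {u+v} ∪ {−u−v} (over u,v ∈ P) contains every integer n with |n| ≤ 2·N1·M + 2M − 4. -/
import Mathlib


def diffSet (P : Set ℤ) : Set ℤ := {d | ∃ u ∈ P, ∃ v ∈ P, d = u - v}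

def sumSet (P : Set ℤ) : Set ℤ := {s | ∃ u ∈ P, ∃ v ∈ P, s = u + v}

def SDC (P : Set ℤ) : Set ℤ :=
  diffSet P ∪ sumSet P ∪ {s | ∃ u ∈ P, ∃ v ∈ P, s = -u - v}

noncomputable def weight (P : Set ℤ) (f : ℤ) : ℕ :=
  Set.ncard {p : ℤ × ℤ | p.1 ∈ P ∧ p.2 ∈ P ∧ p.1 - p.2 = f}

def AULAs (M N1 : ℤ) : Set ℤ :=
  {x | ∃ k, 0 ≤ k ∧ k ≤ N1 - 1 ∧ x = k * M} ∪
  {x | ∃ j, 1 ≤ j ∧ j ≤ M / 2 ∧ x = N1 * M - M / 2 - 1 + j} ∪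
  {x | ∃ j, 1 ≤ j ∧ j ≤ M / 2 - 1 ∧ x = N1 * M + j}

def SAULAs (M N1 : ℤ) : Set ℤ :=
  {x | ∃ k, 0 ≤ k ∧ k ≤ N1 - 1 ∧ x = M / 2 + k * M} ∪
  {x | ∃ j, 1 ≤ j ∧ j ≤ M / 2 ∧ x = N1 * M - 1 + j} ∪
  {x | ∃ j, 1 ≤ j ∧ j ≤ M / 2 - 1 ∧ x = N1 * M + M / 2 + j}

def TSAULAs (M N1 : ℤ) : Set ℤ :=
  {x | ∃ k, 0 ≤ k ∧ k ≤ N1 - 1 ∧ x = M / 2 + k * M} ∪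
  {x | ∃ j, 1 ≤ j ∧ j ≤ M / 2 - 1 ∧ x = N1 * M - M / 2 + 2 * j} ∪
  {-(N1 * M) - M / 2 + 1} ∪
  {x | ∃ j, 1 ≤ j ∧ j ≤ M / 2 - 1 ∧ x = N1 * M + M / 2 - 1 + 2 * j}

def CoTSAULAs (M N1 : ℤ) : Set ℤ :=
  TSAULAs M N1 ∪ {N1 * M + 3 * M / 2 - 2}

lemma sdc_diff {P : Set ℤ} {u v n : ℤ} (hu : u ∈ P) (hv : v ∈ P) (h : n = u - v) :
    n ∈ SDC P := Or.inl (Or.inl ⟨u, hu, v, hv, h⟩)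

lemma sdc_sum {P : Set ℤ} {u v n : ℤ} (hu : u ∈ P) (hv : v ∈ P) (h : n = u + v) :
    n ∈ SDC P := Or.inl (Or.inr ⟨u, hu, v, hv, h⟩)

lemma sdc_nsum {P : Set ℤ} {u v n : ℤ} (hu : u ∈ P) (hv : v ∈ P) (h : n = -u - v) :
    n ∈ SDC P := Or.inr ⟨u, hu, v, hv, h⟩

lemma sdc_neg {P : Set ℤ} {n : ℤ} (h : n ∈ SDC P) : -n ∈ SDC P := by
  rcases h with (⟨u, hu, v, hv, he⟩ | ⟨u, hu, v, hv, he⟩) | ⟨u, hu, v, hv, he⟩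
  · exact sdc_diff hv hu (by omega)
  · exact sdc_nsum hu hv (by omega)
  · exact sdc_sum hu hv (by omega)

lemma key (m N1 : ℤ) (hm : 3 ≤ m) (hN1 : 2 ≤ N1) (n : ℤ) (hn0 : 0 ≤ n)
    (hnU : n ≤ 2 * N1 * (m + m) + 2 * (m + m) - 4) : n ∈ SDC (TSAULAs (m + m) N1) := by
  have h2 : (m + m) / 2 = m := by omega
  have memA : ∀ k : ℤ, 0 ≤ k → k ≤ N1 - 1 → m + k * (m + m) ∈ TSAULAs (m + m) N1 := by
    intro k h0 h1
    exact Or.inl (Or.inl (Or.inl ⟨k, h0, h1, by rw [h2]⟩))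
  have memB : ∀ j : ℤ, 1 ≤ j → j ≤ m - 1 →
      N1 * (m + m) - m + 2 * j ∈ TSAULAs (m + m) N1 := by
    intro j h0 h1
    exact Or.inl (Or.inl (Or.inr ⟨j, h0, by omega, by rw [h2]⟩))
  have memC : -(N1 * (m + m)) - m + 1 ∈ TSAULAs (m + m) N1 := by
    have : (-(N1 * (m + m)) - m + 1 : ℤ) = -(N1 * (m + m)) - (m + m) / 2 + 1 := by rw [h2]
    exact Or.inl (Or.inr this)
  have memD : ∀ j : ℤ, 1 ≤ j → j ≤ m - 1 →
      N1 * (m + m) + m - 1 + 2 * j ∈ TSAULAs (m + m) N1 := by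
    intro j h0 h1
    exact Or.inr ⟨j, h0, by omega, by rw [h2]⟩
  obtain ⟨t, r, heq, hr0, hrlt, ht0⟩ : ∃ t r, (m + m) * t + r = n ∧ 0 ≤ r ∧ r < m + m ∧ 0 ≤ t :=
    ⟨n / (m + m), n % (m + m), Int.mul_ediv_add_emod n (m + m), Int.emod_nonneg n (by omega),
      Int.emod_lt_of_pos n (by omega), Int.ediv_nonneg hn0 (by omega)⟩
  subst heq
  have ht_ub : t ≤ 2 * N1 + 1 := by
    by_contra hlt
    have h1 : (m + m) * (2 * N1 + 2) ≤ (m + m) * t :=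
      mul_le_mul_of_nonneg_left (by omega) (by omega)
    nlinarith
  obtain ⟨j, hj⟩ | ⟨j, hj⟩ := Int.even_or_odd r
  · -- even case
    subst hj
    have hj1 : 0 ≤ j := by omega
    have hj2 : j ≤ m - 1 := by omega
    by_cases hA : t ≤ N1 - 1
    · by_cases hj0 : j = 0
      · subst hj0
        by_cases ht00 : t = 0
        · subst ht00
          exact sdc_diff (memA 0 le_rfl (by omega)) (memA 0 le_rfl (by omega)) (by ring)
        · exact sdc_sum (memA (t - 1) (by omega) (by omega)) (memA 0 le_rfl (by omega)) (by ring)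
      · exact sdc_diff (memB j (by omega) hj2) (memA (N1 - 1 - t) (by omega) (by omega)) (by ring)
    · by_cases hB : t ≤ 2 * N1 - 1
      · by_cases hj0 : j = 0
        · subst hj0
          exact sdc_sum (memA (N1 - 1) (by omega) le_rfl)
            (memA (t - N1) (by omega) (by omega)) (by ring)
        · exact sdc_sum (memA (t - N1) (by omega) (by omega)) (memB j (by omega) hj2) (by ring)
      · by_cases hC : t = 2 * N1
        · subst hC
          by_cases hjm : j = m - 1
          · subst hjm
            exact sdc_nsum memC memC (by ring)
          · exact sdc_sum (memB (m - 1) (by omega) le_rfl)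
              (memB (j + 1) (by omega) (by omega)) (by ring)
        · have htv : t = 2 * N1 + 1 := by omega
          subst htv
          have hjb : j + j ≤ m + m - 4 := by nlinarith
          exact sdc_diff (memD (j + 1) (by omega) (by omega)) memC (by ring)
  · -- odd case
    subst hj
    have hj1 : 0 ≤ j := by omega
    have hj2 : j ≤ m - 1 := by omega
    by_cases hjm : j = m - 1
    · subst hjm
      by_cases hA : t ≤ N1 - 1
      · exact sdc_nsum (memA (N1 - t - 1) (by omega) (by omega)) memC (by ring)
      · by_cases hB : t ≤ 2 * N1 - 1
        · exact sdc_diff (memA (t - N1) (by omega) (by omega)) memC (by ring)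
        · by_cases hC : t = 2 * N1
          · subst hC
            exact sdc_sum (memB (m - 1) (by omega) le_rfl) (memD 1 (by omega) (by omega)) (by ring)
          · have htv : t = 2 * N1 + 1 := by omega
            exfalso
            subst htv
            nlinarith
    · by_cases ht00 : t = 0
      · subst ht00
        exact sdc_nsum (memB (m - 1 - j) (by omega) (by omega)) memC (by ring)
      · by_cases hA : t ≤ N1
        · exact sdc_diff (memD (j + 1) (by omega) (by omega))
            (memA (N1 - t) (by omega) (by omega)) (by ring)
        · by_cases hB : t ≤ 2 * N1
          · exact sdc_sum (memA (t - N1 - 1) (by omega) (by omega))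
              (memD (j + 1) (by omega) (by omega)) (by ring)
          · have htv : t = 2 * N1 + 1 := by omega
            subst htv
            have hjb : j + j ≤ m + m - 5 := by nlinarith
            exact sdc_sum (memB (m - 1) (by omega) le_rfl)
              (memD (j + 2) (by omega) (by omega)) (by ring)

theorem stmt6 (M N1 : ℤ) (hM : 6 ≤ M) (hMe : Even M) (hN1 : 2 ≤ N1) :
    ∀ n : ℤ, |n| ≤ 2 * N1 * M + 2 * M - 4 → n ∈ SDC (TSAULAs M N1) := by
  obtain ⟨m, rfl⟩ := hMe
  intro n hn
  have hm : 3 ≤ m := by omega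
  rcases le_or_gt 0 n with h | h
  · exact key m N1 hm hN1 n h (by rw [abs_of_nonneg h] at hn; linarith)
  · have h1 : -n ∈ SDC (TSAULAs (m + m) N1) :=
      key m N1 hm hN1 (-n) (by omega) (by rw [abs_of_neg h] at hn; linarith)
    have h2 := sdc_neg h1
    rwa [neg_neg] at h2
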